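/- arXiv:1508.00697 — 2 statements merged into one kernel-verified Lean document; each statement's English description precedes it below -/
import Mathlib

section
/- Let A be a unital C*-algebra with essential socle and u, v ∈ A rank-one elements. If u ≤◇ v, then u = v. -/
/-- The diamond relation: `a ≤◇ b` iff `aA ⊆ bA`, `Aa ⊆ Ab`, and `a a* a = a b* a`. -/
def Diamond {A : Type*} [CStarAlgebra A] (a b : A) : Prop :=
  (∀ x : A, ∃ y : A, a * x = b * y) ∧
  (∀ x : A, ∃ y : A, x * a = y * b) ∧
  a * star a * a = a * star b * a

/-- A nonzero element `u` is rank-one iff `uAu = ℂu`. -/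
def IsRankOne {A : Type*} [CStarAlgebra A] (u : A) : Prop :=
  u ≠ 0 ∧ ∀ x : A, ∃ c : ℂ, u * x * u = c • u

lemma cstar_aaa_eq_zero {A : Type*} [CStarAlgebra A] {a : A}
    (h : a * star a * a = 0) : a = 0 := by
  have h1 : (star a * a) * (star a * a) = 0 := by
    calc (star a * a) * (star a * a) = star a * (a * star a * a) := by noncomm_ring
      _ = 0 := by rw [h, mul_zero]
  have hsa : star (star a * a) = star a * a := by simp [star_mul]
  have h2 : ‖star a * a‖ * ‖star a * a‖ = 0 := by
    rw [← CStarRing.norm_star_mul_self, hsa, h1, norm_zero]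
  have h3 : star a * a = 0 := norm_eq_zero.mp (mul_self_eq_zero.mp h2)
  have h4 : ‖a‖ * ‖a‖ = 0 := by rw [← CStarRing.norm_star_mul_self, h3, norm_zero]
  exact norm_eq_zero.mp (mul_self_eq_zero.mp h4)

lemma smul_cancel_ne_zero {A : Type*} [CStarAlgebra A] {u : A} (hu : u ≠ 0)
    {a b : ℂ} (h : a • u = b • u) : a = b := by
  by_contra hab
  have h0 : (a - b) • u = 0 := by rw [sub_smul, h, sub_self]
  rcases smul_eq_zero.mp h0 with h' | h'
  · exact hab (sub_eq_zero.mp h')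
  · exact hu h'

theorem rankOne_diamond_eq {A : Type*} [CStarAlgebra A]
    (hEss : ∀ a : A, (∀ u : A, IsRankOne u → a * u = 0) → a = 0)
    (u v : A) (hu : IsRankOne u) (hv : IsRankOne v) (h : Diamond u v) : u = v := by
  obtain ⟨hu0, hu1⟩ := hu
  obtain ⟨hv0, hv1⟩ := hv
  obtain ⟨hL, hR, h3⟩ := h
  obtain ⟨y, hy⟩ := hL 1
  obtain ⟨z, hz⟩ := hR 1
  rw [mul_one] at hy  -- hy : u = v * y
  rw [one_mul] at hz  -- hz : u = z * v
  obtain ⟨cv, hcv⟩ := hv1 (star v)  -- v * star v * v = cv • v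
  obtain ⟨cu, hcu⟩ := hu1 (star u)  -- u * star u * u = cu • u
  obtain ⟨cw, hcw⟩ := hv1 (star u)  -- v * star u * v = cw • v
  have uxv : ∀ (x : A) (c : ℂ), v * x * v = c • v → u * x * v = c • u := by
    intro x c hx
    calc u * x * v = z * (v * x * v) := by rw [hz]; noncomm_ring
      _ = c • (z * v) := by rw [hx, mul_smul_comm]
      _ = c • u := by rw [← hz]
  have vxu : ∀ (x : A) (c : ℂ), v * x * v = c • v → v * x * u = c • u := by
    intro x c hx
    calc v * x * u = (v * x * v) * y := by rw [hy]; noncomm_ring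
      _ = c • (v * y) := by rw [hx, smul_mul_assoc]
      _ = c • u := by rw [← hy]
  have uxu : ∀ (x : A) (c : ℂ), v * x * v = c • v → u * x * u = c • (u * y) := by
    intro x c hx
    calc u * x * u = (u * x * v) * y := by rw [hy]; noncomm_ring
      _ = c • (u * y) := by rw [uxv x c hx, smul_mul_assoc]
  have hcv0 : cv ≠ 0 := by
    intro hc
    apply hv0
    apply cstar_aaa_eq_zero
    rw [hcv, hc, zero_smul]
  have hcu0 : cu ≠ 0 := by
    intro hc
    apply hu0
    apply cstar_aaa_eq_zero
    rw [hcu, hc, zero_smul]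
  have huy : cv • (u * y) = cu • u := by
    rw [← uxu (star v) cv hcv, ← h3]; exact hcu
  have h5 : cw • (u * y) = cu • u := by
    rw [← uxu (star u) cw hcw]; exact hcu
  have hscal : (cw * cu) • u = (cv * cu) • u := by
    rw [mul_smul, mul_smul]
    calc cw • (cu • u) = cw • (cv • (u * y)) := by rw [huy]
      _ = cv • (cw • (u * y)) := smul_comm _ _ _
      _ = cv • (cu • u) := by rw [h5]
  have hcwv : cw = cv :=
    mul_right_cancel₀ hcu0 (smul_cancel_ne_zero hu0 hscal)
  rw [hcwv] at hcw  -- hcw : v * star u * v = cv • v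
  have e2 : u * star v * u = cu • u := by rw [← h3]; exact hcu
  have e3 : u * star u * v = cv • u := uxv (star u) cv hcw
  have e4 : u * star v * v = cv • u := uxv (star v) cv hcv
  have e5 : v * star u * u = cv • u := vxu (star u) cv hcw
  have e7 : v * star v * u = cv • u := vxu (star v) cv hcv
  have expand : (u - v) * star (u - v) * (u - v) =
      u * star u * u - u * star u * v - u * star v * u + u * star v * v
      - v * star u * u + v * star u * v + v * star v * u - v * star v * v := by
    rw [star_sub]; noncomm_ring
  have hzero : (u - v) * star (u - v) * (u - v) = 0 := by
    rw [expand, hcu, e2, e3, e4, e5, hcw, e7, hcv]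
    module
  have := cstar_aaa_eq_zero hzero
  exact sub_eq_zero.mp this
end

section
/- Let A and B be C*-algebras and T : A → B a Jordan *-homomorphism. Then T preserves the diamond partial order on regular elements: if a, b ∈ A are regular and a ≤◇ b, then T(a) ≤◇ T(b). -/
section Aux

variable {A B : Type*} [CStarAlgebra A] [CStarAlgebra B]

theorem jordan_sym (T : A →ₗ[ℂ] B) (hJ : ∀ a : A, T (a ^ 2) = (T a) ^ 2)
    (x z : A) : T (x * z + z * x) = T x * T z + T z * T x := by
  have h := hJ (x + z)
  have e1 : (x + z) ^ 2 = x ^ 2 + (x * z + z * x) + z ^ 2 := by noncomm_ring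
  have e2 : (T x + T z) ^ 2 = T x ^ 2 + (T x * T z + T z * T x) + T z ^ 2 := by noncomm_ring
  rw [e1] at h
  simp only [map_add] at h ⊢
  rw [hJ x, hJ z, e2] at h
  exact add_left_cancel (add_right_cancel h)

theorem jordan_triple (T : A →ₗ[ℂ] B) (hJ : ∀ a : A, T (a ^ 2) = (T a) ^ 2)
    (x z : A) : T (x * z * x) = T x * T z * T x := by
  have key : (2 : ℂ) • (x * z * x) =
      ((x * z + z * x) * x + x * (x * z + z * x)) - (x ^ 2 * z + z * x ^ 2) := by
    simp only [two_smul]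
    noncomm_ring
  have hT : (2 : ℂ) • T (x * z * x) = (2 : ℂ) • (T x * T z * T x) := by
    rw [← map_smul, key, map_sub]
    rw [jordan_sym T hJ (x * z + z * x) x, jordan_sym T hJ (x ^ 2) z,
      jordan_sym T hJ x z, hJ x]
    simp only [two_smul]
    noncomm_ring
  exact smul_right_injective B two_ne_zero hT

end Aux

theorem jordan_star_hom_preserves_diamond {A B : Type*} [CStarAlgebra A] [CStarAlgebra B]
    (T : A →ₗ[ℂ] B)
    (hJ : ∀ a : A, T (a ^ 2) = (T a) ^ 2)
    (hstar : ∀ a : A, T (star a) = star (T a))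
    (a b : A)
    (ha : ∃ x : A, a * x * a = a ∧ x * a * x = x ∧
      star (a * x) = a * x ∧ star (x * a) = x * a)
    (hb : ∃ x : A, b * x * b = b ∧ x * b * x = x ∧
      star (b * x) = b * x ∧ star (x * b) = x * b)
    (h : Diamond a b) : Diamond (T a) (T b) := by
  obtain ⟨u, hu1, -, -, -⟩ := ha
  obtain ⟨w, hw1, -, -, -⟩ := hb
  obtain ⟨h1, h2, h3⟩ := h
  -- a ∈ bA : a = b * y
  obtain ⟨y, hy⟩ : ∃ y : A, a = b * y := by
    obtain ⟨y, hy⟩ := h1 (u * a)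
    exact ⟨y, by rw [← hy, ← mul_assoc, hu1]⟩
  -- a ∈ Ab : a = z * b
  obtain ⟨z, hz⟩ : ∃ z : A, a = z * b := by
    obtain ⟨z, hz⟩ := h2 (a * u)
    exact ⟨z, by rw [← hz, hu1]⟩
  have hab : b * w * a = a := by
    rw [hy, ← mul_assoc, mul_assoc b w b, ← mul_assoc, hw1]
  have hba : a * (w * b) = a := by
    rw [hz, mul_assoc, ← mul_assoc b w b, hw1]
  have key : a = b * (w * a * w) * b := by
    calc a = (b * w * a) * (w * b) := by rw [hab, hba]
      _ = b * (w * a * w) * b := by noncomm_ring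
  have keyT : T a = T b * T (w * a * w) * T b := by
    conv_lhs => rw [key]
    exact jordan_triple T hJ b (w * a * w)
  refine ⟨?_, ?_, ?_⟩
  · intro x
    exact ⟨T (w * a * w) * T b * x, by rw [keyT]; noncomm_ring⟩
  · intro x
    exact ⟨x * (T b * T (w * a * w)), by rw [keyT]; noncomm_ring⟩
  · calc T a * star (T a) * T a
        = T a * T (star a) * T a := by rw [hstar]
      _ = T (a * star a * a) := (jordan_triple T hJ a (star a)).symm
      _ = T (a * star b * a) := by rw [h3]
      _ = T a * T (star b) * T a := jordan_triple T hJ a (star b)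
      _ = T a * star (T b) * T a := by rw [hstar]
end
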